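/- (Optimal baseline) Let b*_t(s,a) = q_{π,t}(s,a). For every baseline function b, every time t, and every state s: Var( G^{b*}(τ^{μ^{*,b*}}_{t:T−1}) | S_t = s ) ≤ Var( G^b(τ^{μ^{*,b}}_{t:T−1}) | S_t = s ), where μ^{*,c} denotes the optimal behavior policy tailored to baseline c. -/

import Mathlib

/-!
Because `μ^{*,c}` vanishes only where `π (q_π - c) = 0`, the estimator `G^c` under it is unbiased
for `v_π`, and `u^c = (q_π - c)² + ν_π + E[Var(G^c_{t+1} | S_{t+1})]` is the second moment of the
return estimate `R_{t+1} + G^c_{t+1}` about `c`. Conditioning on the first action then gives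
`Var(G^c | S_t = s) = ∑_a π² / μ^{*,c} · u^c - (v_π - c̄)² = (∑_a π √u^c)² - (v_π - c̄)²`,
the last step being the equality case of Cauchy–Schwarz. For `b* = q_π` the second term vanishes,
and backward induction on `t` gives `(q_π - b)² + u^{b*} ≤ u^b`; the triangle inequality for the
plane vectors `(π √u^{b*}, π (q_π - b))` then yields
`(∑ π √u^{b*})² + (∑ π (q_π - b))² ≤ (∑ π √u^b)²`.
-/

open Finset

namespace DOpt

variable {S A : Type}

/-- A time-indexed policy: for each time step and state, a probability distribution on actions. -/
def IsPolicy [Fintype A] (μ : ℕ → S → A → ℝ) : Prop :=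
  ∀ t s, (∀ a, 0 ≤ μ t s a) ∧ ∑ a, μ t s a = 1

/-- A transition probability kernel on the finite state space. -/
def IsKernel [Fintype S] (p : S → A → S → ℝ) : Prop :=
  ∀ s a, (∀ s', 0 ≤ p s a s') ∧ ∑ s', p s a s' = 1

/-- Action value `q_{π,t}(s,a)` computed with `n` remaining transitions after time `t`
(`n = T - 1 - t` in a horizon-`T` MDP). -/
noncomputable def qval [Fintype S] [Fintype A] (p : S → A → S → ℝ) (π : ℕ → S → A → ℝ)
    (r : S → A → ℝ) : ℕ → ℕ → S → A → ℝ
  | 0, _, s, a => r s a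
  | n + 1, t, s, a =>
      r s a + ∑ s', p s a s' * ∑ a', π (t + 1) s' a' * qval p π r n (t + 1) s' a'

/-- `q_{π,t}(s,a)` in the horizon-`T` MDP. -/
noncomputable def qf [Fintype S] [Fintype A] (T : ℕ) (p : S → A → S → ℝ)
    (π : ℕ → S → A → ℝ) (r : S → A → ℝ) (t : ℕ) (s : S) (a : A) : ℝ :=
  qval p π r (T - 1 - t) t s a

/-- `v_{π,t}(s) = Σ_a π_t(a|s) q_{π,t}(s,a)`. -/
noncomputable def vf [Fintype S] [Fintype A] (T : ℕ) (p : S → A → S → ℝ)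
    (π : ℕ → S → A → ℝ) (r : S → A → ℝ) (t : ℕ) (s : S) : ℝ :=
  ∑ a, π t s a * qf T p π r t s a

/-- `ν_{π,t}(s,a) = Var_{s' ∼ p(·|s,a)}(v_{π,t+1}(s'))` for `t ≤ T-2`, and `0` at `t = T-1`. -/
noncomputable def nuf [Fintype S] [Fintype A] (T : ℕ) (p : S → A → S → ℝ)
    (π : ℕ → S → A → ℝ) (r : S → A → ℝ) (t : ℕ) (s : S) (a : A) : ℝ :=
  if t + 2 ≤ T then
    (∑ s', p s a s' * (vf T p π r (t + 1) s') ^ 2) -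
      (∑ s', p s a s' * vf T p π r (t + 1) s') ^ 2
  else 0

/-- Trajectories with `n` further transitions after the first action:
`(a_t, s_{t+1}, a_{t+1}, …, s_{t+n}, a_{t+n})`. -/
def Traj (S A : Type) : ℕ → Type
  | 0 => A
  | n + 1 => A × S × Traj S A n

/-- Expectation, over trajectories generated by the behavior policy `μ` starting at time `t`
in state `s` with `n` further transitions, of a function `f` of the trajectory. -/
noncomputable def Exp [Fintype S] [Fintype A] (p : S → A → S → ℝ) (μ : ℕ → S → A → ℝ) :
    (n : ℕ) → ℕ → S → (Traj S A n → ℝ) → ℝ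
  | 0, t, s, f => ∑ a, μ t s a * f a
  | n + 1, t, s, f =>
      ∑ a, μ t s a * ∑ s', p s a s' * Exp p μ n (t + 1) s' (fun τ => f (a, s', τ))

/-- Conditional variance of a function of the trajectory, given `S_t = s`. -/
noncomputable def Var [Fintype S] [Fintype A] (p : S → A → S → ℝ) (μ : ℕ → S → A → ℝ)
    (n : ℕ) (t : ℕ) (s : S) (f : Traj S A n → ℝ) : ℝ :=
  Exp p μ n t s (fun τ => (f τ) ^ 2) - (Exp p μ n t s f) ^ 2

/-- `b̄_t(s) = Σ_a π_t(a|s) b_t(s,a)`. -/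
noncomputable def bbar [Fintype A] (π : ℕ → S → A → ℝ) (b : ℕ → S → A → ℝ)
    (t : ℕ) (s : S) : ℝ :=
  ∑ a, π t s a * b t s a

/-- The per-decision importance-sampling estimator `G^b` with baseline `b`, target policy `π`
and behavior policy `μ`, as a function of the trajectory from time `t` (with `n` further
transitions, `n = T - 1 - t`). -/
noncomputable def Gest [Fintype S] [Fintype A] (π μ : ℕ → S → A → ℝ) (r : S → A → ℝ)
    (b : ℕ → S → A → ℝ) : (n : ℕ) → ℕ → S → Traj S A n → ℝ
  | 0, t, s, a => (π t s a / μ t s a) * (r s a - b t s a) + bbar π b t s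
  | n + 1, t, s, (a, s', τ) =>
      (π t s a / μ t s a) * (r s a + Gest π μ r b n (t + 1) s' τ - b t s a) + bbar π b t s

/-- Normalization of a weight vector into a probability distribution; the uniform distribution
when the total weight vanishes. -/
noncomputable def normPol [Fintype A] (w : A → ℝ) (a : A) : ℝ :=
  if (∑ a', w a') = 0 then ((Fintype.card A : ℝ))⁻¹ else w a / ∑ a', w a'

/-- `u_{π,t}(s,a)` (with baseline `b`), defined backwards in time together with the optimal
behavior policy `μ*`; the first argument is the number `n = T - 1 - t` of remaining
transitions after time `t`. -/
noncomputable def uAux [Fintype S] [Fintype A] (T : ℕ) (p : S → A → S → ℝ)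
    (π : ℕ → S → A → ℝ) (r : S → A → ℝ) (b : ℕ → S → A → ℝ) :
    ℕ → ℕ → S → A → ℝ
  | 0, t, s, a => (qf T p π r t s a - b t s a) ^ 2
  | n + 1, t, s, a =>
      (qf T p π r t s a - b t s a) ^ 2 + nuf T p π r t s a +
        ∑ s', p s a s' *
          Var p
            (fun t' s₁ a₁ => normPol (fun a₂ =>
              π t' s₁ a₂ * Real.sqrt (uAux T p π r b (n - (t' - (t + 1))) t' s₁ a₂)) a₁)
            n (t + 1) s'
            (Gest π
              (fun t' s₁ a₁ => normPol (fun a₂ =>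
                π t' s₁ a₂ * Real.sqrt (uAux T p π r b (n - (t' - (t + 1))) t' s₁ a₂)) a₁)
              r b n (t + 1) s')
  termination_by n => n
  decreasing_by all_goals omega

/-- `u_{π,t}(s,a)` in the horizon-`T` MDP, with baseline `b`. -/
noncomputable def uf [Fintype S] [Fintype A] (T : ℕ) (p : S → A → S → ℝ)
    (π : ℕ → S → A → ℝ) (r : S → A → ℝ) (b : ℕ → S → A → ℝ) (t : ℕ) (s : S) (a : A) : ℝ :=
  uAux T p π r b (T - 1 - t) t s a

/-- The optimal behavior policy `μ*_t(a|s) ∝ π_t(a|s) √(u_{π,t}(s,a))` tailored to the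
baseline `b` (uniform when all the weights vanish). -/
noncomputable def mustar [Fintype S] [Fintype A] (T : ℕ) (p : S → A → S → ℝ)
    (π : ℕ → S → A → ℝ) (r : S → A → ℝ) (b : ℕ → S → A → ℝ) (t : ℕ) (s : S) (a : A) : ℝ :=
  normPol (fun a' => π t s a' * Real.sqrt (uf T p π r b t s a')) a

/-- Conditional expectation `E[G^b(τ^μ_{t:T-1}) | S_t = s]`. -/
noncomputable def ExpG [Fintype S] [Fintype A] (T : ℕ) (p : S → A → S → ℝ)
    (π μ : ℕ → S → A → ℝ) (r : S → A → ℝ) (b : ℕ → S → A → ℝ) (t : ℕ) (s : S) : ℝ :=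
  Exp p μ (T - 1 - t) t s (Gest π μ r b (T - 1 - t) t s)

/-- Conditional variance `Var(G^b(τ^μ_{t:T-1}) | S_t = s)`. -/
noncomputable def VarG [Fintype S] [Fintype A] (T : ℕ) (p : S → A → S → ℝ)
    (π μ : ℕ → S → A → ℝ) (r : S → A → ℝ) (b : ℕ → S → A → ℝ) (t : ℕ) (s : S) : ℝ :=
  Var p μ (T - 1 - t) t s (Gest π μ r b (T - 1 - t) t s)

/-- Membership in the enlarged policy-search space
`Λ = {μ : ∀ t,s,a, μ_t(a|s) = 0 → π_t(a|s)·u_{π,t}(s,a) = 0}`. -/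
def inLambda [Fintype S] [Fintype A] (T : ℕ) (p : S → A → S → ℝ)
    (π : ℕ → S → A → ℝ) (r : S → A → ℝ) (b : ℕ → S → A → ℝ) (μ : ℕ → S → A → ℝ) : Prop :=
  ∀ t s a, t < T → μ t s a = 0 → π t s a * uf T p π r b t s a = 0


/-- The optimal baseline `b*_t(s,a) = q_{π,t}(s,a)`. -/
noncomputable def bstar [Fintype S] [Fintype A] (T : ℕ) (p : S → A → S → ℝ)
    (π : ℕ → S → A → ℝ) (r : S → A → ℝ) : ℕ → S → A → ℝ :=
  fun t s a => qf T p π r t s a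

/-- The zero baseline: with it, `Gest` is the plain PDIS estimator `G^{PDIS}`. -/
def zerob : ℕ → S → A → ℝ := fun _ _ _ => 0

section WeightedSums

variable {ι : Type*} [Fintype ι]

theorem sq_sum_mul_le_sum_mul_sq {w : ι → ℝ} (hw0 : ∀ i, 0 ≤ w i) (hw1 : ∑ i, w i = 1)
    (x : ι → ℝ) : (∑ i, w i * x i) ^ 2 ≤ ∑ i, w i * x i ^ 2 := by
  simpa using (even_two.convexOn_pow (𝕜 := ℝ)).map_sum_le (t := univ) (p := x)
    (fun i _ => hw0 i) hw1 (fun i _ => Set.mem_univ _)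

theorem sq_sum_add_sq_sum_le (x y : ι → ℝ) :
    (∑ i, x i) ^ 2 + (∑ i, y i) ^ 2 ≤ (∑ i, √(x i ^ 2 + y i ^ 2)) ^ 2 := by
  -- the triangle inequality in `ℂ`, viewed as the Euclidean plane
  have h := norm_sum_le univ fun i => (⟨x i, y i⟩ : ℂ)
  simp only [Complex.norm_eq_sqrt_sq_add_sq, Complex.re_sum, Complex.im_sum] at h
  calc (∑ i, x i) ^ 2 + (∑ i, y i) ^ 2 = √((∑ i, x i) ^ 2 + (∑ i, y i) ^ 2) ^ 2 :=
        (Real.sq_sqrt (by positivity)).symm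
    _ ≤ _ := pow_le_pow_left₀ (Real.sqrt_nonneg _) h 2

theorem sq_sum_mul_sqrt_add_sq_sum_mul_le {w d u u' : ι → ℝ} (hw : ∀ i, 0 ≤ w i)
    (hu : ∀ i, 0 ≤ u i) (hle : ∀ i, d i ^ 2 + u i ≤ u' i) :
    (∑ i, w i * √(u i)) ^ 2 + (∑ i, w i * d i) ^ 2 ≤ (∑ i, w i * √(u' i)) ^ 2 := by
  have hnorm : ∀ i, √((w i * √(u i)) ^ 2 + (w i * d i) ^ 2) = w i * √(d i ^ 2 + u i) := by
    intro i
    rw [mul_pow, mul_pow, Real.sq_sqrt (hu i), ← mul_add, Real.sqrt_mul (sq_nonneg _),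
      Real.sqrt_sq (hw i), add_comm (u i)]
  calc _ ≤ (∑ i, √((w i * √(u i)) ^ 2 + (w i * d i) ^ 2)) ^ 2 := sq_sum_add_sq_sum_le _ _
    _ ≤ _ := by
      simp only [hnorm]
      gcongr with i
      · exact sum_nonneg fun i _ => mul_nonneg (hw i) (Real.sqrt_nonneg _)
      · exact hw i
      · exact hle i

theorem mul_div_mul_cancel_of_imp {G₀ : Type*} [CommGroupWithZero G₀] {a b x : G₀}
    (h : a = 0 → b * x = 0) : a * (b / a * x) = b * x := by
  rw [← mul_div_right_comm, ← mul_div_assoc, mul_div_cancel_left_of_imp h]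

theorem pdis_step_mean {μ π c m : ι → ℝ} (hμ : ∑ i, μ i = 1)
    (hsupp : ∀ i, μ i = 0 → π i * (m i - c i) = 0) :
    ∑ i, μ i * (π i / μ i * (m i - c i) + ∑ j, π j * c j) = ∑ i, π i * m i := by
  have h : ∀ i, μ i * (π i / μ i * (m i - c i) + ∑ j, π j * c j)
      = π i * m i - π i * c i + μ i * ∑ j, π j * c j := fun i => by
    rw [mul_add, mul_div_mul_cancel_of_imp (hsupp i), mul_sub]
  simp only [h, sum_add_distrib, sum_sub_distrib, ← sum_mul, hμ]
  ring

/-- One per-decision importance-sampling step: the action `i` is drawn from `μ`, and the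
continuation has mean `m i` and second moment `M i` about the baseline `c i`. Actions with
`μ i = 0` drop out of `∑ π i ^ 2 / μ i * M i` through the convention `x / 0 = 0`. -/
theorem pdis_step_variance {μ π c m M : ι → ℝ} (hμ : ∑ i, μ i = 1)
    (hsupp : ∀ i, μ i = 0 → π i * (m i - c i) = 0) :
    ∑ i, μ i * ((π i / μ i) ^ 2 * M i + 2 * (π i / μ i) * (∑ j, π j * c j) * (m i - c i)
        + (∑ j, π j * c j) ^ 2)
      - (∑ i, μ i * (π i / μ i * (m i - c i) + ∑ j, π j * c j)) ^ 2
      = ∑ i, π i ^ 2 / μ i * M i - (∑ i, π i * (m i - c i)) ^ 2 := by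
  set cbar := ∑ j, π j * c j
  have hsq : ∀ i, μ i * ((π i / μ i) ^ 2 * M i + 2 * (π i / μ i) * cbar * (m i - c i) + cbar ^ 2)
      = π i ^ 2 / μ i * M i + 2 * cbar * (π i * (m i - c i)) + μ i * cbar ^ 2 := by
    intro i
    rw [← mul_div_mul_cancel_of_imp (hsupp i)]
    rcases eq_or_ne (μ i) 0 with h | h
    · simp [h]
    · field_simp
  have hmean : ∀ i, μ i * (π i / μ i * (m i - c i) + cbar) = π i * (m i - c i) + μ i * cbar := by
    intro i
    rw [mul_add, mul_div_mul_cancel_of_imp (hsupp i)]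
  simp only [hsq, hmean, sum_add_distrib, ← mul_sum, ← sum_mul, hμ]
  ring

end WeightedSums

section NormPol

variable [Fintype A]

theorem normPol_nonneg {w : A → ℝ} (hw : ∀ a, 0 ≤ w a) (a : A) : 0 ≤ normPol w a := by
  unfold normPol
  split_ifs
  · positivity
  · exact div_nonneg (hw a) (sum_nonneg fun a _ => hw a)

theorem sum_normPol [Nonempty A] (w : A → ℝ) : ∑ a, normPol w a = 1 := by
  unfold normPol
  split_ifs with h
  · simp [card_univ]
  · rw [← sum_div, div_self h]

theorem eq_zero_of_normPol_eq_zero {w : A → ℝ} {a : A} (h : normPol w a = 0) : w a = 0 := by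
  have : Nonempty A := ⟨a⟩
  unfold normPol at h
  split_ifs at h with hw
  · simp at h
  · exact (div_eq_zero_iff.1 h).resolve_right hw

-- Actions with `x a * y a = 0` are covered by the convention `x / 0 = 0`.
theorem sq_div_normPol_mul_sq {x y : A → ℝ} (hx : ∀ a, 0 ≤ x a) (hy : ∀ a, 0 ≤ y a) (a : A) :
    x a ^ 2 / normPol (fun a => x a * y a) a * y a ^ 2 = x a * y a * ∑ a, x a * y a := by
  unfold normPol
  split_ifs with hsum
  · have hxy : x a * y a = 0 :=
      (sum_eq_zero_iff_of_nonneg fun a _ => mul_nonneg (hx a) (hy a)).1 hsum a (mem_univ a)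
    rw [hsum, mul_zero, div_mul_eq_mul_div, ← mul_pow, hxy]
    simp
  · rcases eq_or_ne (x a * y a) 0 with hxy | hxy
    · simp [hxy]
    · field_simp

theorem sum_sq_div_normPol_mul_sq {x y : A → ℝ} (hx : ∀ a, 0 ≤ x a) (hy : ∀ a, 0 ≤ y a) :
    ∑ a, x a ^ 2 / normPol (fun a => x a * y a) a * y a ^ 2 = (∑ a, x a * y a) ^ 2 := by
  rw [sum_congr rfl fun a _ => sq_div_normPol_mul_sq hx hy a, ← sum_mul, sq]

theorem isPolicy_normPol [Nonempty A] {π : ℕ → S → A → ℝ} (hπ : IsPolicy π)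
    (u : ℕ → S → A → ℝ) :
    IsPolicy fun t s a => normPol (fun a' => π t s a' * √(u t s a')) a := fun t s =>
  ⟨normPol_nonneg fun a => mul_nonneg ((hπ t s).1 a) (Real.sqrt_nonneg _), sum_normPol _⟩

end NormPol

section Expectation

variable [Fintype S] [Fintype A] {p : S → A → S → ℝ} {μ : ℕ → S → A → ℝ}

theorem Exp_add (n t : ℕ) (s : S) (f g : Traj S A n → ℝ) :
    Exp p μ n t s (fun τ => f τ + g τ) = Exp p μ n t s f + Exp p μ n t s g := by
  induction n generalizing t s with
  | zero => simp only [Exp, mul_add, sum_add_distrib]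
  | succ n ih => simp only [Exp, ih, mul_add, sum_add_distrib]

theorem Exp_const_mul (n t : ℕ) (s : S) (α : ℝ) (f : Traj S A n → ℝ) :
    Exp p μ n t s (fun τ => α * f τ) = α * Exp p μ n t s f := by
  induction n generalizing t s with
  | zero => simp only [Exp, mul_left_comm _ α, ← mul_sum]
  | succ n ih => simp only [Exp, ih, mul_left_comm _ α, ← mul_sum]

theorem Exp_const (hp : IsKernel p) (hμ : IsPolicy μ) (n t : ℕ) (s : S) (β : ℝ) :
    Exp p μ n t s (fun _ => β) = β := by
  induction n generalizing t s with
  | zero => simp only [Exp, ← sum_mul, (hμ t s).2, one_mul]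
  | succ n ih => simp only [Exp, ih, ← sum_mul, (hp s _).2, (hμ t s).2, one_mul]

theorem Exp_nonneg (hp : IsKernel p) (hμ : IsPolicy μ) {n t : ℕ} {s : S}
    {f : Traj S A n → ℝ} (hf : ∀ τ, 0 ≤ f τ) : 0 ≤ Exp p μ n t s f := by
  induction n generalizing t s with
  | zero => exact sum_nonneg fun a _ => mul_nonneg ((hμ t s).1 a) (hf a)
  | succ n ih =>
    exact sum_nonneg fun a _ => mul_nonneg ((hμ t s).1 a) <|
      sum_nonneg fun s' _ => mul_nonneg ((hp s a).1 s') (ih fun τ => hf _)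

theorem Var_eq_Exp_sq_sub (hp : IsKernel p) (hμ : IsPolicy μ) (n t : ℕ) (s : S)
    (f : Traj S A n → ℝ) :
    Var p μ n t s f = Exp p μ n t s (fun τ => (f τ - Exp p μ n t s f) ^ 2) := by
  have h : (fun τ => (f τ - Exp p μ n t s f) ^ 2)
      = fun τ => f τ ^ 2 + (-2 * Exp p μ n t s f * f τ + Exp p μ n t s f ^ 2) :=
    funext fun τ => by ring
  rw [h, Exp_add, Exp_add, Exp_const_mul, Exp_const hp hμ, Var]
  ring

theorem Var_nonneg (hp : IsKernel p) (hμ : IsPolicy μ) (n t : ℕ) (s : S)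
    (f : Traj S A n → ℝ) : 0 ≤ Var p μ n t s f := by
  rw [Var_eq_Exp_sq_sub hp hμ]
  exact Exp_nonneg hp hμ fun τ => sq_nonneg _

theorem Exp_congr_policy {μ' : ℕ → S → A → ℝ} {n t : ℕ}
    (h : ∀ k ≤ n, μ (t + k) = μ' (t + k)) (s : S) (f : Traj S A n → ℝ) :
    Exp p μ n t s f = Exp p μ' n t s f := by
  induction n generalizing t s with
  | zero =>
    have h0 : μ t = μ' t := h 0 le_rfl
    simp only [Exp, h0]
  | succ n ih =>
    have h0 : μ t = μ' t := h 0 (Nat.zero_le _)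
    have hnext : ∀ k ≤ n, μ (t + 1 + k) = μ' (t + 1 + k) := fun k hk => by
      rw [add_right_comm, add_assoc]; exact h (k + 1) (by omega)
    simp only [Exp, h0, ih hnext]

end Expectation

section Estimator

variable [Fintype S] [Fintype A] {p : S → A → S → ℝ} {π μ : ℕ → S → A → ℝ} {r : S → A → ℝ}
  {c : ℕ → S → A → ℝ}

/-- `E[f | S_t = s, A_t = a]` under the behavior policy `μ`. -/
noncomputable def ExpAct (p : S → A → S → ℝ) (μ : ℕ → S → A → ℝ) :
    (n : ℕ) → ℕ → S → A → (Traj S A n → ℝ) → ℝ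
  | 0, _, _, a, f => f a
  | n + 1, t, s, a, f => ∑ s', p s a s' * Exp p μ n (t + 1) s' (fun τ => f (a, s', τ))

/-- `R_{t+1} + G^c(τ_{t+1:T-1})`, the quantity that `G^c(τ_{t:T-1})` importance-weights. -/
noncomputable def returnEst (π μ : ℕ → S → A → ℝ) (r : S → A → ℝ) (c : ℕ → S → A → ℝ) :
    (n : ℕ) → ℕ → S → Traj S A n → ℝ
  | 0, _, s, a => r s a
  | n + 1, t, s, (a, s', τ) => r s a + Gest π μ r c n (t + 1) s' τ

theorem Gest_congr_policy {μ' : ℕ → S → A → ℝ} {n t : ℕ}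
    (h : ∀ k ≤ n, μ (t + k) = μ' (t + k)) (s : S) (τ : Traj S A n) :
    Gest π μ r c n t s τ = Gest π μ' r c n t s τ := by
  induction n generalizing t s with
  | zero =>
    have h0 : μ t = μ' t := h 0 le_rfl
    simp only [Gest, h0]
  | succ n ih =>
    have h0 : μ t = μ' t := h 0 (Nat.zero_le _)
    have hnext : ∀ k ≤ n, μ (t + 1 + k) = μ' (t + 1 + k) := fun k hk => by
      rw [add_right_comm, add_assoc]; exact h (k + 1) (by omega)
    obtain ⟨a, s', τ⟩ := τ
    simp only [Gest, h0, ih hnext]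

theorem Var_Gest_congr_policy {μ' : ℕ → S → A → ℝ} {n t : ℕ}
    (h : ∀ k ≤ n, μ (t + k) = μ' (t + k)) (s : S) :
    Var p μ n t s (Gest π μ r c n t s) = Var p μ' n t s (Gest π μ' r c n t s) := by
  simp only [Var, Exp_congr_policy h, funext (Gest_congr_policy (π := π) (r := r) (c := c) h s)]

theorem Exp_eq_sum_ExpAct (n t : ℕ) (s : S) (f : Traj S A n → ℝ) :
    Exp p μ n t s f = ∑ a, μ t s a * ExpAct p μ n t s a f := by
  cases n <;> rfl

theorem ExpAct_add (n t : ℕ) (s : S) (a : A) (f g : Traj S A n → ℝ) :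
    ExpAct p μ n t s a (fun τ => f τ + g τ) = ExpAct p μ n t s a f + ExpAct p μ n t s a g := by
  cases n with
  | zero => rfl
  | succ n => simp only [ExpAct, Exp_add, mul_add, sum_add_distrib]

theorem ExpAct_const_mul (n t : ℕ) (s : S) (a : A) (α : ℝ) (f : Traj S A n → ℝ) :
    ExpAct p μ n t s a (fun τ => α * f τ) = α * ExpAct p μ n t s a f := by
  cases n with
  | zero => rfl
  | succ n => simp only [ExpAct, Exp_const_mul, mul_left_comm _ α, ← mul_sum]

theorem ExpAct_const (hp : IsKernel p) (hμ : IsPolicy μ) (n t : ℕ) (s : S) (a : A) (β : ℝ) :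
    ExpAct p μ n t s a (fun _ => β) = β := by
  cases n with
  | zero => rfl
  | succ n => simp only [ExpAct, Exp_const hp hμ, ← sum_mul, (hp s a).2, one_mul]

theorem ExpAct_comp_Gest (F : ℝ → ℝ) (n t : ℕ) (s : S) (a : A) :
    ExpAct p μ n t s a (fun τ => F (Gest π μ r c n t s τ))
      = ExpAct p μ n t s a (fun τ =>
          F (π t s a / μ t s a * (returnEst π μ r c n t s τ - c t s a) + bbar π c t s)) := by
  cases n <;> rfl

theorem ExpAct_Gest (hp : IsKernel p) (hμ : IsPolicy μ) (n t : ℕ) (s : S) (a : A) :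
    ExpAct p μ n t s a (Gest π μ r c n t s)
      = π t s a / μ t s a * (ExpAct p μ n t s a (returnEst π μ r c n t s) - c t s a)
        + bbar π c t s := by
  set ρ := π t s a / μ t s a
  calc _ = ExpAct p μ n t s a (fun τ => ρ * returnEst π μ r c n t s τ
        + (bbar π c t s - ρ * c t s a)) :=
        (ExpAct_comp_Gest id n t s a).trans (congrArg _ (funext fun τ => by simp only [id]; ring))
    _ = _ := by
      rw [ExpAct_add, ExpAct_const_mul, ExpAct_const hp hμ]
      ring

theorem ExpAct_sq_Gest (hp : IsKernel p) (hμ : IsPolicy μ) (n t : ℕ) (s : S) (a : A) :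
    ExpAct p μ n t s a (fun τ => Gest π μ r c n t s τ ^ 2)
      = (π t s a / μ t s a) ^ 2
          * ExpAct p μ n t s a (fun τ => (returnEst π μ r c n t s τ - c t s a) ^ 2)
        + 2 * (π t s a / μ t s a) * bbar π c t s
          * (ExpAct p μ n t s a (returnEst π μ r c n t s) - c t s a)
        + bbar π c t s ^ 2 := by
  set ρ := π t s a / μ t s a
  set cbar := bbar π c t s
  calc _ = ExpAct p μ n t s a (fun τ => ρ ^ 2 * (returnEst π μ r c n t s τ - c t s a) ^ 2
        + (2 * ρ * cbar * returnEst π μ r c n t s τ + (cbar ^ 2 - 2 * ρ * cbar * c t s a))) :=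
        (ExpAct_comp_Gest (· ^ 2) n t s a).trans (congrArg _ (funext fun τ => by ring))
    _ = _ := by
      rw [ExpAct_add, ExpAct_add, ExpAct_const_mul, ExpAct_const_mul, ExpAct_const hp hμ]
      ring

theorem Exp_Gest (hp : IsKernel p) (hμ : IsPolicy μ) (n t : ℕ) (s : S)
    (hsupp : ∀ a, μ t s a = 0 →
      π t s a * (ExpAct p μ n t s a (returnEst π μ r c n t s) - c t s a) = 0) :
    Exp p μ n t s (Gest π μ r c n t s)
      = ∑ a, π t s a * ExpAct p μ n t s a (returnEst π μ r c n t s) := by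
  simp only [Exp_eq_sum_ExpAct, ExpAct_Gest hp hμ]
  exact pdis_step_mean (hμ t s).2 hsupp

theorem Var_Gest (hp : IsKernel p) (hμ : IsPolicy μ) (n t : ℕ) (s : S)
    (hsupp : ∀ a, μ t s a = 0 →
      π t s a * (ExpAct p μ n t s a (returnEst π μ r c n t s) - c t s a) = 0) :
    Var p μ n t s (Gest π μ r c n t s)
      = ∑ a, π t s a ^ 2 / μ t s a
          * ExpAct p μ n t s a (fun τ => (returnEst π μ r c n t s τ - c t s a) ^ 2)
        - (∑ a, π t s a * (ExpAct p μ n t s a (returnEst π μ r c n t s) - c t s a)) ^ 2 := by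
  simp only [Var, Exp_eq_sum_ExpAct, ExpAct_Gest hp hμ, ExpAct_sq_Gest hp hμ]
  exact pdis_step_variance (hμ t s).2 hsupp

theorem ExpAct_returnEst_succ (hp : IsKernel p) (hμ : IsPolicy μ) (n t : ℕ) (s : S) (a : A) :
    ExpAct p μ (n + 1) t s a (returnEst π μ r c (n + 1) t s)
      = r s a + ∑ s', p s a s' * Exp p μ n (t + 1) s' (Gest π μ r c n (t + 1) s') := by
  change ∑ s', p s a s' * Exp p μ n (t + 1) s' (fun τ => r s a + Gest π μ r c n (t + 1) s' τ) = _
  simp only [Exp_add, Exp_const hp hμ, mul_add, sum_add_distrib, ← sum_mul, (hp s a).2, one_mul]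

theorem ExpAct_sq_returnEst_succ (hp : IsKernel p) (hμ : IsPolicy μ) (n t : ℕ) (s : S) (a : A)
    (k : ℝ) :
    ExpAct p μ (n + 1) t s a (fun τ => (returnEst π μ r c (n + 1) t s τ - k) ^ 2)
      = (ExpAct p μ (n + 1) t s a (returnEst π μ r c (n + 1) t s) - k) ^ 2
        + ((∑ s', p s a s' * Exp p μ n (t + 1) s' (Gest π μ r c n (t + 1) s') ^ 2)
          - (∑ s', p s a s' * Exp p μ n (t + 1) s' (Gest π μ r c n (t + 1) s')) ^ 2)
        + ∑ s', p s a s' * Var p μ n (t + 1) s' (Gest π μ r c n (t + 1) s') := by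
  set G := fun s' => Gest π μ r c n (t + 1) s'
  have hsecond : ∀ s', Exp p μ n (t + 1) s' (fun τ => (r s a + G s' τ - k) ^ 2)
      = Var p μ n (t + 1) s' (G s') + (r s a - k + Exp p μ n (t + 1) s' (G s')) ^ 2 := by
    intro s'
    have h : (fun τ => (r s a + G s' τ - k) ^ 2)
        = fun τ => G s' τ ^ 2 + (2 * (r s a - k) * G s' τ + (r s a - k) ^ 2) :=
      funext fun τ => by ring
    rw [h, Exp_add, Exp_add, Exp_const_mul, Exp_const hp hμ, Var]
    ring
  have hterm : ∀ s', p s a s' * (Var p μ n (t + 1) s' (G s')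
        + (r s a - k + Exp p μ n (t + 1) s' (G s')) ^ 2)
      = p s a s' * Var p μ n (t + 1) s' (G s') + ((r s a - k) ^ 2 * p s a s'
        + 2 * (r s a - k) * (p s a s' * Exp p μ n (t + 1) s' (G s'))
        + p s a s' * Exp p μ n (t + 1) s' (G s') ^ 2) := fun s' => by ring
  change ∑ s', p s a s' * Exp p μ n (t + 1) s' (fun τ => (r s a + G s' τ - k) ^ 2) = _
  rw [ExpAct_returnEst_succ hp hμ]
  simp only [hsecond, hterm, sum_add_distrib, ← mul_sum, (hp s a).2]
  ring

theorem Exp_Gest_eq_sum_qval_of_ExpAct (hp : IsKernel p) (hμ : IsPolicy μ) {n t : ℕ} {s : S}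
    (hq : ∀ a, ExpAct p μ n t s a (returnEst π μ r c n t s) = qval p π r n t s a)
    (hsupp : ∀ a, μ t s a = 0 → π t s a * (qval p π r n t s a - c t s a) = 0) :
    Exp p μ n t s (Gest π μ r c n t s) = ∑ a, π t s a * qval p π r n t s a := by
  simp only [Exp_Gest hp hμ n t s fun a => hq a ▸ hsupp a, hq]

theorem ExpAct_returnEst_eq_qval (hp : IsKernel p) (hμ : IsPolicy μ) {n t : ℕ}
    (hsupp : ∀ k ≤ n, ∀ s a, μ (t + k) s a = 0 →
      π (t + k) s a * (qval p π r (n - k) (t + k) s a - c (t + k) s a) = 0)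
    (s : S) (a : A) :
    ExpAct p μ n t s a (returnEst π μ r c n t s) = qval p π r n t s a := by
  induction n generalizing t s a with
  | zero => rfl
  | succ n ih =>
    have hsupp' : ∀ k ≤ n, ∀ s a, μ (t + 1 + k) s a = 0 →
        π (t + 1 + k) s a * (qval p π r (n - k) (t + 1 + k) s a - c (t + 1 + k) s a) = 0 := by
      intro k hk s a h
      have := hsupp (k + 1) (by omega) s a
      rw [Nat.add_sub_add_right, ← add_assoc, add_right_comm] at this
      exact this h
    have hnext : ∀ s', Exp p μ n (t + 1) s' (Gest π μ r c n (t + 1) s')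
        = ∑ a', π (t + 1) s' a' * qval p π r n (t + 1) s' a' := fun s' =>
      Exp_Gest_eq_sum_qval_of_ExpAct hp hμ (ih hsupp' s') fun a' => hsupp' 0 (Nat.zero_le _) s' a'
    rw [ExpAct_returnEst_succ hp hμ]
    simp only [hnext, qval]

theorem Exp_Gest_eq_sum_qval (hp : IsKernel p) (hμ : IsPolicy μ) {n t : ℕ}
    (hsupp : ∀ k ≤ n, ∀ s a, μ (t + k) s a = 0 →
      π (t + k) s a * (qval p π r (n - k) (t + k) s a - c (t + k) s a) = 0)
    (s : S) :
    Exp p μ n t s (Gest π μ r c n t s) = ∑ a, π t s a * qval p π r n t s a :=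
  Exp_Gest_eq_sum_qval_of_ExpAct hp hμ (ExpAct_returnEst_eq_qval hp hμ hsupp s)
    fun a => hsupp 0 (Nat.zero_le _) s a

end Estimator

section OptimalBehavior

variable [Fintype S] [Fintype A] {T : ℕ} {p : S → A → S → ℝ} {π : ℕ → S → A → ℝ}
  {r : S → A → ℝ} {c : ℕ → S → A → ℝ}

theorem qf_eq_qval {n t : ℕ} (h : T - 1 - t = n) (s : S) (a : A) :
    qf T p π r t s a = qval p π r n t s a := by
  rw [qf, h]

theorem nuf_nonneg (hp : IsKernel p) (t : ℕ) (s : S) (a : A) : 0 ≤ nuf T p π r t s a := by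
  unfold nuf
  split_ifs
  · exact sub_nonneg.2 (sq_sum_mul_le_sum_mul_sq (hp s a).1 (hp s a).2 _)
  · exact le_rfl

theorem uf_of_succ_eq {t : ℕ} (h : t + 1 = T) (s : S) (a : A) :
    uf T p π r c t s a = (qf T p π r t s a - c t s a) ^ 2 := by
  rw [uf, show T - 1 - t = 0 by omega, uAux]

/-- The recursion defining `uAux` runs on a policy built from `uAux` itself; on the times it
is used, that policy is `mustar`. -/
theorem uf_of_add_two_le {t : ℕ} (h : t + 2 ≤ T) (s : S) (a : A) :
    uf T p π r c t s a = (qf T p π r t s a - c t s a) ^ 2 + nuf T p π r t s a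
      + ∑ s', p s a s' * VarG T p π (mustar T p π r c) r c (t + 1) s' := by
  obtain ⟨n, hn⟩ : ∃ n, T - 1 - t = n + 1 := ⟨T - 2 - t, by omega⟩
  unfold uf VarG
  rw [hn, uAux, show T - 1 - (t + 1) = n by omega]
  congr 1
  refine sum_congr rfl fun s' _ => congrArg _ (Var_Gest_congr_policy (fun k hk => ?_) s')
  funext s₁ a₁
  unfold mustar uf
  rw [show n - (t + 1 + k - (t + 1)) = T - 1 - (t + 1 + k) by omega]

theorem sq_le_uf [Nonempty A] (hp : IsKernel p) (hπ : IsPolicy π) (t : ℕ) (s : S) (a : A) :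
    (qf T p π r t s a - c t s a) ^ 2 ≤ uf T p π r c t s a := by
  unfold uf
  cases T - 1 - t with
  | zero => rw [uAux]
  | succ n =>
    rw [uAux]
    exact le_add_of_le_of_nonneg (le_add_of_nonneg_right (nuf_nonneg hp t s a))
      (sum_nonneg fun s' _ => mul_nonneg ((hp s a).1 s') (Var_nonneg hp (isPolicy_normPol hπ _) ..))

theorem uf_nonneg [Nonempty A] (hp : IsKernel p) (hπ : IsPolicy π) (t : ℕ) (s : S) (a : A) :
    0 ≤ uf T p π r c t s a :=
  (sq_nonneg _).trans (sq_le_uf hp hπ t s a)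

theorem isPolicy_mustar [Nonempty A] (hπ : IsPolicy π) : IsPolicy (mustar T p π r c) :=
  isPolicy_normPol hπ _

theorem mul_qf_sub_eq_zero_of_mustar_eq_zero [Nonempty A] (hp : IsKernel p) (hπ : IsPolicy π)
    {t : ℕ} {s : S} {a : A} (h : mustar T p π r c t s a = 0) :
    π t s a * (qf T p π r t s a - c t s a) = 0 := by
  have hw := eq_zero_of_normPol_eq_zero (w := fun a' => π t s a' * √(uf T p π r c t s a')) h
  rcases mul_eq_zero.1 hw with hπa | hu
  · rw [hπa, zero_mul]
  · have hle := (sq_le_uf hp hπ t s a).trans (Real.sqrt_eq_zero'.1 hu)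
    rw [pow_eq_zero_iff two_ne_zero |>.1 (le_antisymm hle (sq_nonneg _)), mul_zero]

theorem VarG_eq_Var {μ : ℕ → S → A → ℝ} {n t : ℕ} (h : T - 1 - t = n) (s : S) :
    VarG T p π μ r c t s = Var p μ n t s (Gest π μ r c n t s) := by
  subst h; rfl

theorem mustar_covers [Nonempty A] (hp : IsKernel p) (hπ : IsPolicy π) {n t : ℕ}
    (h : n + t + 1 = T) :
    ∀ k ≤ n, ∀ s a, mustar T p π r c (t + k) s a = 0 →
      π (t + k) s a * (qval p π r (n - k) (t + k) s a - c (t + k) s a) = 0 := by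
  intro k hk s a hz
  rw [← qf_eq_qval (by omega : T - 1 - (t + k) = n - k)]
  exact mul_qf_sub_eq_zero_of_mustar_eq_zero hp hπ hz

theorem ExpAct_sq_returnEst_mustar [Nonempty A] (hp : IsKernel p) (hπ : IsPolicy π) {n t : ℕ}
    (h : n + t + 1 = T) (s : S) (a : A) :
    ExpAct p (mustar T p π r c) n t s a
        (fun τ => (returnEst π (mustar T p π r c) r c n t s τ - c t s a) ^ 2)
      = uf T p π r c t s a := by
  cases n with
  | zero =>
    rw [uf_of_succ_eq (by omega), qf_eq_qval (by omega : T - 1 - t = 0)]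
    rfl
  | succ n =>
    have hM : IsPolicy (mustar T p π r c) := isPolicy_mustar hπ
    have hmean : ∀ s', Exp p (mustar T p π r c) n (t + 1) s'
        (Gest π (mustar T p π r c) r c n (t + 1) s') = vf T p π r (t + 1) s' := fun s' => by
      rw [Exp_Gest_eq_sum_qval hp hM (mustar_covers hp hπ (by omega)) s']
      simp only [vf, qf_eq_qval (by omega : T - 1 - (t + 1) = n)]
    rw [ExpAct_sq_returnEst_succ hp hM, ExpAct_returnEst_eq_qval hp hM (mustar_covers hp hπ h),
      ← qf_eq_qval (by omega : T - 1 - t = n + 1), uf_of_add_two_le (by omega)]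
    simp only [hmean, nuf, if_pos (by omega : t + 2 ≤ T),
      VarG_eq_Var (by omega : T - 1 - (t + 1) = n)]

theorem VarG_mustar [Nonempty A] (hp : IsKernel p) (hπ : IsPolicy π) {t : ℕ} (ht : t < T)
    (s : S) :
    VarG T p π (mustar T p π r c) r c t s
      = (∑ a, π t s a * √(uf T p π r c t s a)) ^ 2
        - (∑ a, π t s a * (qf T p π r t s a - c t s a)) ^ 2 := by
  have hM : IsPolicy (mustar T p π r c) := isPolicy_mustar hπ
  have hn : T - 1 - t + t + 1 = T := by omega
  have hq : ∀ a, ExpAct p (mustar T p π r c) (T - 1 - t) t s a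
      (returnEst π (mustar T p π r c) r c (T - 1 - t) t s) = qf T p π r t s a := fun a =>
    (ExpAct_returnEst_eq_qval hp hM (mustar_covers hp hπ hn) s a).trans (qf_eq_qval rfl s a).symm
  rw [VarG, Var_Gest hp hM _ t s fun a hz => hq a ▸ mul_qf_sub_eq_zero_of_mustar_eq_zero hp hπ hz]
  simp only [hq, ExpAct_sq_returnEst_mustar hp hπ hn]
  have hcs := sum_sq_div_normPol_mul_sq (hπ t s).1 fun a => Real.sqrt_nonneg (uf T p π r c t s a)
  simp only [Real.sq_sqrt (uf_nonneg hp hπ _ _ _)] at hcs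
  rw [← hcs]
  rfl

theorem sq_add_uf_bstar_le (hp : IsKernel p) (b : ℕ → S → A → ℝ) {t : ℕ} (ht : t < T)
    (hnext : t + 2 ≤ T → ∀ s',
      VarG T p π (mustar T p π r (bstar T p π r)) r (bstar T p π r) (t + 1) s'
        ≤ VarG T p π (mustar T p π r b) r b (t + 1) s')
    (s : S) (a : A) :
    (qf T p π r t s a - b t s a) ^ 2 + uf T p π r (bstar T p π r) t s a ≤ uf T p π r b t s a := by
  have hq : qf T p π r t s a - bstar T p π r t s a = 0 := sub_self _
  rcases (by omega : t + 1 = T ∨ t + 2 ≤ T) with hlast | hlt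
  · rw [uf_of_succ_eq hlast, uf_of_succ_eq hlast, hq]
    simp
  · rw [uf_of_add_two_le hlt, uf_of_add_two_le hlt, hq, zero_pow two_ne_zero]
    have := sum_le_sum fun s' (_ : s' ∈ univ) =>
      mul_le_mul_of_nonneg_left (hnext hlt s') ((hp s a).1 s')
    linarith

theorem VarG_bstar_le [Nonempty A] (hp : IsKernel p) (hπ : IsPolicy π) (b : ℕ → S → A → ℝ)
    {t : ℕ} (ht : t < T)
    (hnext : t + 2 ≤ T → ∀ s',
      VarG T p π (mustar T p π r (bstar T p π r)) r (bstar T p π r) (t + 1) s'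
        ≤ VarG T p π (mustar T p π r b) r b (t + 1) s')
    (s : S) :
    VarG T p π (mustar T p π r (bstar T p π r)) r (bstar T p π r) t s
      ≤ VarG T p π (mustar T p π r b) r b t s := by
  have hmean : ∑ a, π t s a * (qf T p π r t s a - bstar T p π r t s a) = 0 := by
    simp [bstar]
  rw [VarG_mustar hp hπ ht, VarG_mustar hp hπ ht, hmean]
  have := sq_sum_mul_sqrt_add_sq_sum_mul_le (hπ t s).1 (uf_nonneg hp hπ t s)
    (sq_add_uf_bstar_le hp b ht hnext s)
  linarith

end OptimalBehavior

theorem optimal_baseline_general {S A : Type} [Fintype S] [Fintype A] [Nonempty A]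
    (T : ℕ)
    (p : S → A → S → ℝ) (hp : IsKernel p)
    (r : S → A → ℝ)
    (π : ℕ → S → A → ℝ) (hπ : IsPolicy π)
    (b : ℕ → S → A → ℝ)
    (t : ℕ) (ht : t < T) (s : S) :
    VarG T p π (mustar T p π r (bstar T p π r)) r (bstar T p π r) t s ≤
      VarG T p π (mustar T p π r b) r b t s := by
  obtain ⟨n, hn⟩ : ∃ n, n + t + 1 = T := ⟨T - 1 - t, by omega⟩
  induction n generalizing t s with
  | zero => exact VarG_bstar_le hp hπ b ht (fun h => absurd h (by omega)) s
  | succ n ih =>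
    exact VarG_bstar_le hp hπ b ht (fun _ s' => ih (t + 1) (by omega) s' (by omega)) s

/-- Optimal baseline: with `b*_t(s,a) = q_{π,t}(s,a)`, for every baseline `b`,
every time `t` and state `s`,
`Var(G^{b*}(τ^{μ^{*,b*}}_{t:T−1})|S_t=s) ≤ Var(G^b(τ^{μ^{*,b}}_{t:T−1})|S_t=s)`,
where `μ^{*,c}` is the optimal behavior policy tailored to the baseline `c`. -/
theorem optimal_baseline {S A : Type} [Fintype S] [Fintype A] [Nonempty A]
    (T : ℕ) (hT : 1 ≤ T)
    (p : S → A → S → ℝ) (hp : IsKernel p)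
    (r : S → A → ℝ)
    (π : ℕ → S → A → ℝ) (hπ : IsPolicy π)
    (b : ℕ → S → A → ℝ)
    (t : ℕ) (ht : t < T) (s : S) :
    VarG T p π (mustar T p π r (bstar T p π r)) r (bstar T p π r) t s ≤
      VarG T p π (mustar T p π r b) r b t s :=
  optimal_baseline_general T p hp r π hπ b t ht s

end DOpt
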